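/- Let G be a strongly regular graph with parameters (19, 6, 1, 2), let {a, b, c} be a triangle in G with associated sets A, B, C, and let W be the set of vertices distinct from and non-adjacent to all of a, b, c. Then no vertex w ∈ W belongs to two distinct triangles of the form {w, x, y} and {w, x', y'} with x, x' ∈ A and y, y' ∈ B together with a third triangle whose other two vertices both lie in C; equivalently, the three triangles through any w ∈ W cannot have their base edges distributed as two edges between A and B and one edge inside C. -/

import Mathlib

namespace SimpleGraph

theorem IsSRGWith.eq_of_mem_commonNeighbors {V : Type*} [Fintype V] {G : SimpleGraph V}
    [DecidableRel G.Adj] {n k μ : ℕ} (h : G.IsSRGWith n k 1 μ) {u u' v w : V} (huu' : G.Adj u u')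
    (hv : v ∈ G.commonNeighbors u u') (hw : w ∈ G.commonNeighbors u u') : v = w := by
  have hcard : Fintype.card (G.commonNeighbors u u') ≤ 1 := (h.of_adj u u' huu').le
  exact congrArg Subtype.val (Fintype.card_le_one_iff.mp hcard ⟨v, hv⟩ ⟨w, hw⟩)

end SimpleGraph

theorem srg_19_6_1_2_no_bad_triangle_distribution_general
    {V : Type} [Fintype V] [DecidableEq V] (G : SimpleGraph V) [DecidableRel G.Adj]
    (h : G.IsSRGWith 19 6 1 2) (a b c : V)
    (A B C W : Finset V)
    (hC : C = Finset.univ.filter (fun v => G.Adj c v ∧ v ≠ a ∧ v ≠ b))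
    (hW : W = Finset.univ \ (A ∪ B ∪ C ∪ {a, b, c})) :
    ∀ w ∈ W, ∀ x x' y y' u u' : V,
      x ∈ A → x' ∈ A → y ∈ B → y' ∈ B → u ∈ C → u' ∈ C →
      G.Adj w x → G.Adj w y → G.Adj x y →
      G.Adj w x' → G.Adj w y' → G.Adj x' y' →
      ¬(x = x' ∧ y = y') →
      G.Adj w u → G.Adj w u' → G.Adj u u' → False := by
  -- The edge uu' inside C already lies in the triangle {c, u, u'}, and λ = 1.
  intro w hw _ _ _ _ u u' _ _ _ _ huC hu'C _ _ _ _ _ _ _ hwu hwu' huu'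
  subst hC hW
  have hcu : G.Adj c u := (Finset.mem_filter.mp huC).2.1
  have hcu' : G.Adj c u' := (Finset.mem_filter.mp hu'C).2.1
  have hcw : c = w :=
    h.eq_of_mem_commonNeighbors huu' ⟨hcu.symm, hcu'.symm⟩ ⟨hwu.symm, hwu'.symm⟩
  subst hcw
  simp at hw

/-- For a triangle {a,b,c} in an srg(19,6,1,2), no vertex w of W lies in two distinct
triangles each having one vertex in A and one in B, together with a third triangle whose
other two vertices both lie in C. -/
theorem srg_19_6_1_2_no_bad_triangle_distribution
    {V : Type} [Fintype V] [DecidableEq V] (G : SimpleGraph V) [DecidableRel G.Adj]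
    (h : G.IsSRGWith 19 6 1 2) (a b c : V)
    (hab : G.Adj a b) (hac : G.Adj a c) (hbc : G.Adj b c)
    (A B C W : Finset V)
    (hA : A = Finset.univ.filter (fun v => G.Adj a v ∧ v ≠ b ∧ v ≠ c))
    (hB : B = Finset.univ.filter (fun v => G.Adj b v ∧ v ≠ a ∧ v ≠ c))
    (hC : C = Finset.univ.filter (fun v => G.Adj c v ∧ v ≠ a ∧ v ≠ b))
    (hW : W = Finset.univ \ (A ∪ B ∪ C ∪ {a, b, c})) :
    ∀ w ∈ W, ∀ x x' y y' u u' : V,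
      x ∈ A → x' ∈ A → y ∈ B → y' ∈ B → u ∈ C → u' ∈ C →
      G.Adj w x → G.Adj w y → G.Adj x y →
      G.Adj w x' → G.Adj w y' → G.Adj x' y' →
      ¬(x = x' ∧ y = y') →
      G.Adj w u → G.Adj w u' → G.Adj u u' → False :=
  srg_19_6_1_2_no_bad_triangle_distribution_general G h a b c A B C W hC hW
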